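/- If Γ = Γ_1 * Γ_2 is a non-discrete metrizable topological group whose underlying group is a non-trivial free product, then the word length function is unbounded on every non-empty open subset of Γ. -/

import Mathlib

open Monoid

open scoped Classical in
/-- The list of letters of the unique reduced form of an element of a free product. -/
noncomputable def FP.letters {ι : Type*} {G : ι → Type*} [∀ i, Group (G i)]
    (γ : CoprodI G) : List (Σ i, G i) :=
  (CoprodI.Word.equiv (M := G) γ).toList

/-- The word length of an element of a free product. -/
noncomputable def FP.wlen {ι : Type*} {G : ι → Type*} [∀ i, Group (G i)]
    (γ : CoprodI G) : ℕ :=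
  (FP.letters γ).length

/-- An element is cyclically reduced if its reduced form `x₁ ⋯ xₙ` has `n ≤ 1` or
`x₁ ≠ xₙ⁻¹`. -/
noncomputable def FP.CyclicallyReduced {ι : Type*} {G : ι → Type*} [∀ i, Group (G i)]
    (γ : CoprodI G) : Prop :=
  FP.wlen γ ≤ 1 ∨ ∀ h : FP.letters γ ≠ [],
    CoprodI.of ((FP.letters γ).head h).2 ≠ (CoprodI.of (((FP.letters γ).getLast h)).2)⁻¹

namespace FP
section General
variable {ι : Type*} {G : ι → Type*} [∀ i, Group (G i)]

theorem prod_letters (γ : CoprodI G) :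
    ((FP.letters γ).map fun p => CoprodI.of p.2).prod = γ := by
  classical
  show (CoprodI.Word.equiv (M := G) γ).prod = γ
  exact CoprodI.Word.equiv.symm_apply_apply γ

theorem letters_ne_one (γ : CoprodI G) : ∀ p ∈ FP.letters γ, p.2 ≠ 1 := by
  classical
  exact (CoprodI.Word.equiv (M := G) γ).ne_one

theorem letters_chain' (γ : CoprodI G) :
    (FP.letters γ).Chain' (fun a b => a.1 ≠ b.1) := by
  classical
  exact (CoprodI.Word.equiv (M := G) γ).chain_ne

theorem letters_eq (l : List (Σ i, G i)) (h1 : ∀ p ∈ l, p.2 ≠ 1)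
    (h2 : l.Chain' (fun a b => a.1 ≠ b.1)) :
    FP.letters ((l.map fun p => CoprodI.of p.2).prod) = l := by
  classical
  have : (l.map fun p => CoprodI.of p.2).prod = CoprodI.Word.prod ⟨l, h1, h2⟩ := rfl
  rw [this]
  show (CoprodI.Word.equiv ((⟨l, h1, h2⟩ : CoprodI.Word G).prod)).toList = l
  rw [show ((⟨l, h1, h2⟩ : CoprodI.Word G).prod) = CoprodI.Word.equiv.symm ⟨l, h1, h2⟩ from rfl,
    Equiv.apply_symm_apply]

theorem letters_one : FP.letters (1 : CoprodI G) = [] := by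
  have := letters_eq ([] : List (Σ i, G i)) (by simp) (by simp [List.Chain'])
  simpa using this

theorem eq_one_of_letters_eq_nil {γ : CoprodI G} (h : FP.letters γ = []) : γ = 1 := by
  have := prod_letters γ
  rw [h] at this
  simpa using this.symm

theorem wlen_of_mul_le {i : ι} (m : G i) (x : CoprodI G) :
    FP.wlen (CoprodI.of m * x) ≤ FP.wlen x + 1 := by
  by_cases hm : m = 1
  · simp [hm]
  rcases hl : FP.letters x with _ | ⟨p, l'⟩
  · have hx : x = 1 := eq_one_of_letters_eq_nil hl
    have : FP.letters (CoprodI.of m * x) = [⟨i, m⟩] := by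
      rw [hx, mul_one]
      have := letters_eq [⟨i, m⟩] (by simpa using hm) (by simp [List.Chain'])
      simpa using this
    simp [wlen, this]
  · have hx : x = ((p :: l').map fun q => CoprodI.of q.2).prod := by
      rw [← hl, prod_letters]
    have hne : ∀ q ∈ p :: l', q.2 ≠ 1 := by rw [← hl]; exact letters_ne_one x
    have hch : (p :: l').Chain' (fun a b => a.1 ≠ b.1) := by rw [← hl]; exact letters_chain' x
    obtain ⟨j, g⟩ := p
    by_cases hij : j = i
    · subst hij
      by_cases hmg : m * g = 1
      · have : CoprodI.of m * x = (l'.map fun q => CoprodI.of q.2).prod := by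
          rw [hx]
          simp only [List.map_cons, List.prod_cons, ← mul_assoc, ← MonoidHom.map_mul, hmg]
          simp
        rw [wlen, this, letters_eq l' (fun q hq => hne q (List.mem_cons_of_mem _ hq)) hch.tail]
        simp [wlen, hl]
        omega
      · have : CoprodI.of m * x = (((⟨j, m * g⟩ :: l') : List (Σ i, G i)).map
            fun q => CoprodI.of q.2).prod := by
          rw [hx]
          simp only [List.map_cons, List.prod_cons, ← mul_assoc, ← MonoidHom.map_mul]
        rw [wlen, this, letters_eq _ ?_ ?_]
        · simp [wlen, hl]
        · intro q hq
          rcases List.mem_cons.1 hq with h | h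
          · subst h; exact hmg
          · exact hne q (List.mem_cons_of_mem _ h)
        · rcases l' with _ | ⟨q, l''⟩
          · simp [List.Chain']
          · have := hch
            simp only [List.Chain', List.isChain_cons_cons] at this ⊢
            exact this
    · have : CoprodI.of m * x = ((((⟨i, m⟩ : Σ i, G i) :: ⟨j, g⟩ :: l')).map
          fun q => CoprodI.of q.2).prod := by
        rw [hx]; simp
      rw [wlen, this, letters_eq _ ?_ ?_]
      · simp [wlen, hl]
      · intro q hq
        rcases List.mem_cons.1 hq with h | h
        · subst h; exact hm
        · exact hne q h
      · simp only [List.Chain', List.isChain_cons_cons]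
        exact ⟨fun h => hij h.symm, hch⟩

theorem wlen_list_mul_le (l : List (Σ i, G i)) (y : CoprodI G) :
    FP.wlen ((l.map fun p => CoprodI.of p.2).prod * y) ≤ l.length + FP.wlen y := by
  induction l generalizing y with
  | nil => simp
  | cons p l ih =>
    simp only [List.map_cons, List.prod_cons, List.length_cons, mul_assoc]
    calc FP.wlen (CoprodI.of p.2 * ((l.map fun p => CoprodI.of p.2).prod * y))
        ≤ FP.wlen ((l.map fun p => CoprodI.of p.2).prod * y) + 1 := wlen_of_mul_le _ _
      _ ≤ l.length + FP.wlen y + 1 := by have := ih y; omega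
      _ = l.length + 1 + FP.wlen y := by omega

theorem wlen_mul_le (x y : CoprodI G) :
    FP.wlen (x * y) ≤ FP.wlen x + FP.wlen y := by
  have := wlen_list_mul_le (FP.letters x) y
  rwa [prod_letters] at this

theorem chain'_flatten_replicate {α : Type*} (R : α → α → Prop) (L : List α) (hL : L.Chain' R)
    (hlast : ∀ x ∈ L.getLast?, ∀ y ∈ L.head?, R x y) (n : ℕ) :
    ((List.replicate n L).flatten).Chain' R := by
  induction n with
  | zero => simp [List.Chain']
  | succ n ih =>
    rw [List.replicate_succ, List.flatten_cons]; simp only [List.Chain', List.isChain_append]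
    refine ⟨hL, ih, fun x hx y hy => ?_⟩
    apply hlast x hx
    rcases L with _ | ⟨a, L'⟩
    · simp at hx
    rcases n with _ | n
    · simp at hy
    · rw [List.replicate_succ, List.flatten_cons, List.head?_append] at hy
      simpa using hy

theorem letters_pow (z : CoprodI G) (hne : FP.letters z ≠ [])
    (hij : ((FP.letters z).head hne).1 ≠ ((FP.letters z).getLast hne).1) :
    ∀ n : ℕ, FP.letters (z ^ n) = (List.replicate n (FP.letters z)).flatten := by
  set L := FP.letters z with hL
  have hlast : ∀ x ∈ L.getLast?, ∀ y ∈ L.head?, x.1 ≠ y.1 := by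
    intro x hx y hy
    rw [List.getLast?_eq_getLast hne] at hx
    rw [List.head?_eq_head hne] at hy
    simp only [Option.mem_def, Option.some_inj] at hx hy
    subst hx; subst hy
    exact fun h => hij h.symm
  have hne1 : ∀ p ∈ L, p.2 ≠ 1 := letters_ne_one z
  intro n
  induction n with
  | zero => simpa using letters_one
  | succ n ih =>
    have key : z ^ (n + 1) =
        (((L ++ (List.replicate n L).flatten).map fun p => CoprodI.of p.2).prod) := by
      rw [List.map_append, List.prod_append, pow_succ', prod_letters, ← ih, prod_letters]
    rw [key, letters_eq _ ?_ ?_, ← List.flatten_cons, ← List.replicate_succ]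
    · intro p hp
      rcases List.mem_append.1 hp with h | h
      · exact hne1 p h
      · obtain ⟨l, hl, hpl⟩ := List.mem_flatten.1 h
        rw [List.eq_of_mem_replicate hl] at hpl
        exact hne1 p hpl
    · simp only [List.Chain', List.isChain_append]
      refine ⟨letters_chain' z, chain'_flatten_replicate _ _ (letters_chain' z) hlast n,
        fun x hx y hy => ?_⟩
      apply hlast x hx
      rcases n with _ | n
      · simp at hy
      · rcases L with _ | ⟨a, L'⟩
        · simp at hx
        · rw [List.replicate_succ, List.flatten_cons, List.head?_append] at hy
          simpa using hy

theorem wlen_pow (z : CoprodI G) (hne : FP.letters z ≠ [])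
    (hij : ((FP.letters z).head hne).1 ≠ ((FP.letters z).getLast hne).1) (n : ℕ) :
    FP.wlen (z ^ n) = n * FP.wlen z := by
  rw [wlen, letters_pow z hne hij n]
  simp [List.length_flatten, List.map_replicate, wlen]

end General

section BoolCase
variable {G : Bool → Type*} [∀ i, Group (G i)]

theorem exists_good (a : ∀ b : Bool, G b) (ha : ∀ b, a b ≠ 1) (x : CoprodI G) (hx : x ≠ 1) :
    ∃ z : CoprodI G,
      (z = x ∨ ∃ b : Bool, z = x * CoprodI.of (a b) * x * (CoprodI.of (a b))⁻¹) ∧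
      ∃ hne : FP.letters z ≠ [],
        ((FP.letters z).head hne).1 ≠ ((FP.letters z).getLast hne).1 := by
  have hne : FP.letters x ≠ [] := fun h => hx (eq_one_of_letters_eq_nil h)
  set L := FP.letters x with hLdef
  set i := (L.head hne).1 with hidef
  set j := (L.getLast hne).1 with hjdef
  by_cases hij : i ≠ j
  · exact ⟨x, Or.inl rfl, hne, hij⟩
  push_neg at hij
  set b := !i with hbdef
  set q₁ : Σ i, G i := ⟨b, a b⟩ with hq₁
  set q₂ : Σ i, G i := ⟨b, (a b)⁻¹⟩ with hq₂
  set M : List (Σ i, G i) := L ++ (q₁ :: (L ++ [q₂])) with hM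
  have hh? : L.head? = some (L.head hne) := List.head?_eq_head hne
  have hg? : L.getLast? = some (L.getLast hne) := List.getLast?_eq_getLast hne
  have hMne2 : ∀ p ∈ M, p.2 ≠ 1 := by
    intro p hp
    simp only [hM, List.mem_append, List.mem_cons, List.mem_singleton] at hp
    rcases hp with h | h | h | h
    · exact letters_ne_one x p h
    · subst h; exact ha b
    · exact letters_ne_one x p h
    · rcases h with h | h
      · subst h; exact inv_ne_one.2 (ha b)
      · simp at h
  have hbnei : (b : Bool) ≠ i := by simp [hbdef]
  have hlastb : ∀ p ∈ L.getLast?, ∀ y : Σ i, G i, y.1 = b → p.1 ≠ y.1 := by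
    intro p hp y hy
    rw [hg?] at hp
    simp only [Option.mem_def, Option.some_inj] at hp
    subst hp
    rw [hy, ← hjdef, ← hij]
    exact fun h => hbnei h.symm
  have hMchain : M.Chain' (fun a b => a.1 ≠ b.1) := by
    rw [hM]; simp only [List.Chain', List.isChain_append]
    refine ⟨letters_chain' x, ?_, fun p hp y hy => ?_⟩
    · rw [List.isChain_cons]
      constructor
      · intro y hy
        rw [List.head?_append, hh?] at hy
        simp only [Option.some_or, Option.mem_def, Option.some_inj] at hy
        subst hy
        exact hbnei
      · rw [List.isChain_append]
        refine ⟨letters_chain' x, List.isChain_singleton _, fun p hp y hy => ?_⟩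
        simp only [List.head?_cons, Option.mem_def, Option.some_inj] at hy
        subst hy
        exact hlastb p hp q₂ rfl
    · simp only [List.head?_cons, Option.mem_def, Option.some_inj] at hy
      subst hy
      exact hlastb p hp q₁ rfl
  set z : CoprodI G := x * CoprodI.of (a b) * x * (CoprodI.of (a b))⁻¹ with hz
  have hxp : (L.map fun p => CoprodI.of p.2).prod = x := by
    rw [hLdef]; exact prod_letters x
  have hzprod : z = (M.map fun p => CoprodI.of p.2).prod := by
    rw [hM]
    simp only [List.map_append, List.map_cons, List.prod_append, List.prod_cons,
      List.map_singleton, List.prod_singleton, map_inv, hxp, List.prod_nil, mul_one]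
    rw [hz]
    group
    simp [q₁, q₂]
  have hlet : FP.letters z = M := by rw [hzprod, letters_eq M hMne2 hMchain]
  have hMne : M ≠ [] := by
    rw [hM]
    rcases L with _ | ⟨c, L'⟩
    · exact absurd rfl hne
    · simp
  have hne' : FP.letters z ≠ [] := by rw [hlet]; exact hMne
  have e1 : ∀ h : FP.letters z ≠ [], (FP.letters z).head h = L.head hne := by
    intro h
    have h? : (FP.letters z).head? = some (L.head hne) := by
      rw [hlet, hM, List.head?_append, hh?]
      simp
    rw [List.head?_eq_head h] at h?
    simpa using h?
  have e2 : ∀ h : FP.letters z ≠ [], (FP.letters z).getLast h = q₂ := by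
    intro h
    have h? : (FP.letters z).getLast? = some q₂ := by
      rw [hlet, hM]
      simp [List.getLast?_append, List.getLast?_cons]
    rw [List.getLast?_eq_getLast h] at h?
    simpa using h?
  refine ⟨z, Or.inr ⟨b, hz⟩, hne', ?_⟩
  rw [e1 hne', e2 hne']
  exact fun hcon => hbnei hcon.symm

end BoolCase
end FP

/-- In a non-discrete metrizable group topology on a free product of two non-trivial
groups, the word length function is unbounded on every non-empty open set. -/
theorem FP.wlen_unbounded_on_open (G : Bool → Type*)
    [∀ i, Group (G i)] [∀ i, Nontrivial (G i)]
    [TopologicalSpace (CoprodI G)] [IsTopologicalGroup (CoprodI G)]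
    [TopologicalSpace.MetrizableSpace (CoprodI G)]
    (hnd : ¬ DiscreteTopology (CoprodI G))
    (U : Set (CoprodI G)) (hU : IsOpen U) (hne : U.Nonempty) :
    ∀ N : ℕ, ∃ γ ∈ U, N < FP.wlen γ := by
  by_contra hcon
  push_neg at hcon
  obtain ⟨N, hN⟩ := hcon
  obtain ⟨u₀, hu₀⟩ := hne
  have haex : ∀ b : Bool, ∃ g : G b, g ≠ 1 := fun b => exists_ne 1
  choose a ha using haex
  set K := FP.wlen (u₀⁻¹) with hK
  set M := N + K + 1 with hMdef
  set f₀ : CoprodI G → CoprodI G := fun x => u₀ * x ^ M with hf₀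
  set fb : Bool → CoprodI G → CoprodI G :=
    fun b x => u₀ * (x * CoprodI.of (a b) * x * (CoprodI.of (a b))⁻¹) ^ M with hfb
  have hc₀ : Continuous f₀ := by
    rw [hf₀]; fun_prop
  have hcb : ∀ b, Continuous (fb b) := by
    intro b; rw [hfb]; fun_prop
  set W : Set (CoprodI G) :=
    f₀ ⁻¹' U ∩ (fb false ⁻¹' U ∩ fb true ⁻¹' U) with hW
  have hWopen : IsOpen W :=
    ((hc₀.isOpen_preimage _ hU).inter
      (((hcb false).isOpen_preimage _ hU).inter ((hcb true).isOpen_preimage _ hU)))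
  have h1W : (1 : CoprodI G) ∈ W := by
    have h1 : ∀ b, fb b 1 = u₀ := by
      intro b; rw [hfb]; simp
    have h0 : f₀ 1 = u₀ := by rw [hf₀]; simp
    simp only [hW, Set.mem_inter_iff, Set.mem_preimage, h0, h1]
    exact ⟨hu₀, hu₀, hu₀⟩
  obtain ⟨x, hxW, hx1⟩ : ∃ x ∈ W, x ≠ 1 := by
    by_contra hws
    push_neg at hws
    have : W = {1} := Set.eq_singleton_iff_unique_mem.2 ⟨h1W, hws⟩
    rw [this] at hWopen
    exact hnd (discreteTopology_of_isOpen_singleton_one hWopen)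
  obtain ⟨z, hzor, hnez, hij⟩ := FP.exists_good a ha x hx1
  have hzU : u₀ * z ^ M ∈ U := by
    rcases hzor with h | ⟨b, h⟩
    · subst h; exact hxW.1
    · subst h
      cases b
      · exact hxW.2.1
      · exact hxW.2.2
  have h1 : FP.wlen (u₀ * z ^ M) ≤ N := hN _ hzU
  have h2 : FP.wlen (z ^ M) ≤ K + N := by
    have : z ^ M = u₀⁻¹ * (u₀ * z ^ M) := by group
    rw [this]
    calc FP.wlen (u₀⁻¹ * (u₀ * z ^ M)) ≤ K + FP.wlen (u₀ * z ^ M) := FP.wlen_mul_le _ _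
      _ ≤ K + N := by omega
  have h3 : FP.wlen (z ^ M) = M * FP.wlen z := FP.wlen_pow z hnez hij M
  have h4 : 1 ≤ FP.wlen z := by
    rcases Nat.eq_zero_or_pos (FP.wlen z) with h | h
    · exact absurd (List.length_eq_zero_iff.1 h) hnez
    · exact h
  have h5 : M ≤ M * FP.wlen z := Nat.le_mul_of_pos_right M h4
  omega
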